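/- Let S, T ∈ SU(N) with S conjugate to Φ_i and T conjugate to Φ_j, where i + j ≤ N. If the (-ζ^i)-eigenspace of S is orthogonal to the (-ζ^j)-eigenspace of T, then the product ST is conjugate to Φ_{i+j} in SU(N). -/

import Mathlib

noncomputable section

def zeta (N : ℕ) : ℂ := Complex.exp (Real.pi * Complex.I / N)

def Phi (N j : ℕ) : Matrix (Fin N) (Fin N) ℂ :=
  Matrix.diagonal (fun a => if (a : ℕ) < j then -(zeta N) ^ j else (zeta N) ^ j)

def ConjIn (N : ℕ) (S T : Matrix (Fin N) (Fin N) ℂ) : Prop :=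
  ∃ U ∈ Matrix.specialUnitaryGroup (Fin N) ℂ, S = U * T * U.conjTranspose

/-- The eigenspace of the matrix `S`, acting on `ℂ^N` with its standard Hermitian inner
product, for the eigenvalue `c`. -/
def eigSp (N : ℕ) (S : Matrix (Fin N) (Fin N) ℂ) (c : ℂ) :
    Submodule ℂ (EuclideanSpace ℂ (Fin N)) where
  carrier := {v | S.mulVec v = c • v}
  add_mem' := by
    intro a b ha hb
    simp only [Set.mem_setOf_eq] at *
    show S.mulVec (a + b) = c • (a + b)
    rw [Matrix.mulVec_add, ha, hb, smul_add]
  zero_mem' := by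
    show S.mulVec 0 = c • (0 : EuclideanSpace ℂ (Fin N))
    rw [Matrix.mulVec_zero]
    simp
  smul_mem' := by
    intro d v hv
    simp only [Set.mem_setOf_eq] at *
    show S.mulVec (d • v) = c • (d • v)
    rw [Matrix.mulVec_smul, hv, smul_comm]

/-
Write `S = ζ^i (1 - 2P)` and `T = ζ^j (1 - 2Q)` with `P`, `Q` the orthogonal projections onto the
`(-ζ^i)`- and `(-ζ^j)`-eigenspaces. Orthogonality of these eigenspaces means `PQ = 0`, so `P + Q` is
an orthogonal projection of rank `i + j` and `ST = ζ^(i+j) (1 - 2(P + Q))`. By the spectral theorem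
a projection of rank `m` is unitarily conjugate to `diag(1, …, 1, 0, …, 0)`, and a unitary
conjugation is a special unitary one after rescaling by an `N`-th root of the inverse determinant.
-/

open Matrix

def initialProj (R : Type*) [Zero R] [One R] (N k : ℕ) : Matrix (Fin N) (Fin N) R :=
  diagonal fun a => if (a : ℕ) < k then 1 else 0

theorem Phi_eq_smul_initialProj (N k : ℕ) :
    Phi N k = zeta N ^ k • (1 - 2 * initialProj ℂ N k) := by
  ext a b
  rcases eq_or_ne a b with rfl | hab
  · simp only [Phi, initialProj, two_mul, diagonal_apply_eq, Matrix.smul_apply, Matrix.sub_apply,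
      Matrix.add_apply, one_apply_eq]
    split_ifs <;> simp
  · simp [Phi, initialProj, two_mul, hab]

theorem isStarProjection_initialProj (R : Type*) [Semiring R] [StarRing R] (N k : ℕ) :
    IsStarProjection (initialProj R N k) where
  isIdempotentElem := by
    rw [IsIdempotentElem, initialProj, diagonal_mul_diagonal]
    congr 1
    ext a
    split_ifs <;> simp
  isSelfAdjoint := by
    rw [IsSelfAdjoint, initialProj, star_eq_conjTranspose, diagonal_conjTranspose]
    congr 1
    ext a
    rw [Pi.star_apply]
    split_ifs <;> simp

theorem trace_initialProj (R : Type*) [AddCommMonoidWithOne R] {N k : ℕ} (hk : k ≤ N) :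
    (initialProj R N k).trace = k := by
  rw [initialProj, trace_diagonal, Finset.sum_boole, Fin.card_filter_val_lt, min_eq_right hk]

theorem Fin.exists_perm_apply_iff_lt {N m : ℕ} (p : Fin N → Prop) [DecidablePred p]
    (hp : Fintype.card {a // p a} = m) :
    ∃ σ : Equiv.Perm (Fin N), ∀ a : Fin N, p (σ a) ↔ (a : ℕ) < m := by
  have hm : m ≤ N := hp ▸ (Fintype.card_subtype_le p).trans_eq (Fintype.card_fin N)
  have hlt : Fintype.card {a : Fin N // (a : ℕ) < m} = m := by
    rw [Fintype.card_subtype, Fin.card_filter_val_lt, min_eq_right hm]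
  let e := Fintype.equivOfCardEq (hlt.trans hp.symm)
  let f := Fintype.equivOfCardEq (α := {a : Fin N // ¬ (a : ℕ) < m}) (β := {a // ¬ p a})
    (by rw [Fintype.card_subtype_compl, Fintype.card_subtype_compl, hlt, hp])
  refine ⟨Equiv.subtypeCongr e f, fun a => ?_⟩
  by_cases ha : (a : ℕ) < m
  · simpa [Equiv.subtypeCongr, ha] using (e ⟨a, ha⟩).2
  · simpa [Equiv.subtypeCongr, ha] using (f ⟨a, ha⟩).2

theorem one_sub_two_mul_mul_one_sub_two_mul {R : Type*} [Ring R] {p q : R} (h : p * q = 0) :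
    (1 - 2 * p) * (1 - 2 * q) = 1 - 2 * (p + q) := by
  noncomm_ring
  simp [h]

section

variable {𝕜 : Type*} [RCLike 𝕜] {n : Type*} [Fintype n] [DecidableEq n]

theorem Matrix.submatrix_id_mem_unitaryGroup {U : Matrix n n 𝕜} (hU : U ∈ unitaryGroup n 𝕜)
    (σ : Equiv.Perm n) : U.submatrix id σ ∈ unitaryGroup n 𝕜 := by
  rw [mem_unitaryGroup_iff, star_eq_conjTranspose, conjTranspose_submatrix, submatrix_mul_equiv,
    submatrix_id_id, ← star_eq_conjTranspose, ← mem_unitaryGroup_iff]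
  exact hU

theorem Matrix.submatrix_id_mul_diagonal_comp_mul_conjTranspose (U : Matrix n n 𝕜) (d : n → 𝕜)
    (σ : Equiv.Perm n) :
    U.submatrix id σ * diagonal (d ∘ σ) * (U.submatrix id σ)ᴴ = U * diagonal d * Uᴴ := by
  rw [← submatrix_diagonal_equiv, conjTranspose_submatrix, submatrix_mul_equiv,
    submatrix_mul_equiv, submatrix_id_id]

theorem Matrix.IsHermitian.eigenvalues_eq_zero_or_one {A : Matrix n n 𝕜} (hA : A.IsHermitian)
    (hA' : IsIdempotentElem A) (a : n) : hA.eigenvalues a = 0 ∨ hA.eigenvalues a = 1 :=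
  hA'.spectrum_subset ℝ (hA.eigenvalues_mem_spectrum_real a)

theorem Matrix.IsHermitian.card_eigenvalues_eq_one {A : Matrix n n 𝕜} (hA : A.IsHermitian)
    (hA' : IsIdempotentElem A) : (Fintype.card {a // hA.eigenvalues a = 1} : 𝕜) = A.trace := by
  rw [hA.trace_eq_sum_eigenvalues, Fintype.card_subtype, ← Finset.sum_boole]
  refine Finset.sum_congr rfl fun a _ => ?_
  rcases hA.eigenvalues_eq_zero_or_one hA' a with h | h <;> simp [h]

theorem Matrix.conjTranspose_mul_eq_zero_of_inner_mulVec_eq_zero {A B : Matrix n n 𝕜}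
    (h : ∀ u v : n → 𝕜, inner 𝕜 (WithLp.toLp 2 (A *ᵥ u)) (WithLp.toLp 2 (B *ᵥ v)) = 0) :
    Aᴴ * B = 0 := by
  ext a b
  have := h (Pi.single a 1) (Pi.single b 1)
  rw [EuclideanSpace.inner_toLp_toLp, mulVec_single_one, mulVec_single_one] at this
  rw [mul_apply', zero_apply, ← this, dotProduct_comm]
  rfl

theorem IsStarProjection.exists_unitary_conj_initialProj {N m : ℕ}
    {R : Matrix (Fin N) (Fin N) 𝕜} (hR : IsStarProjection R) (htr : R.trace = m) :
    ∃ W ∈ unitaryGroup (Fin N) 𝕜, R = W * initialProj 𝕜 N m * Wᴴ := by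
  have hA : R.IsHermitian := hR.isSelfAdjoint
  have hcard : Fintype.card {a // hA.eigenvalues a = 1} = m := by
    exact_mod_cast (hA.card_eigenvalues_eq_one hR.isIdempotentElem).trans htr
  obtain ⟨σ, hσ⟩ := Fin.exists_perm_apply_iff_lt _ hcard
  have hdiag : (RCLike.ofReal ∘ hA.eigenvalues) ∘ σ =
      fun a : Fin N => if (a : ℕ) < m then (1 : 𝕜) else 0 := by
    ext a
    rcases hA.eigenvalues_eq_zero_or_one hR.isIdempotentElem (σ a) with h | h <;>
      simp [← hσ a, h]
  refine ⟨_, submatrix_id_mem_unitaryGroup hA.eigenvectorUnitary.2 σ, ?_⟩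
  rw [initialProj, ← hdiag, submatrix_id_mul_diagonal_comp_mul_conjTranspose]
  exact hA.spectral_theorem

theorem Matrix.exists_mem_specialUnitaryGroup_conj_eq [Nonempty n] {W : Matrix n n ℂ}
    (hW : W ∈ unitaryGroup n ℂ) :
    ∃ U ∈ specialUnitaryGroup n ℂ, ∀ A : Matrix n n ℂ, U * A * Uᴴ = W * A * Wᴴ := by
  have hdet : ‖W.det‖ = 1 := CStarRing.norm_of_mem_unitary (det_of_mem_unitary hW)
  obtain ⟨c, hc⟩ := IsAlgClosed.exists_pow_nat_eq W.det⁻¹ (Fintype.card_pos (α := n))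
  have hc1 : ‖c‖ = 1 := by
    refine (pow_eq_one_iff_of_nonneg (norm_nonneg c) (Fintype.card_ne_zero (α := n))).1 ?_
    rw [← norm_pow, hc, norm_inv, hdet, inv_one]
  have hcc : star c * c = 1 := by
    rw [Complex.star_def, Complex.conj_mul', hc1]
    norm_num
  refine ⟨c • W, mem_specialUnitaryGroup_iff.2
    ⟨Unitary.smul_mem_of_mem (Unitary.mem_iff_star_mul_self.2 hcc) hW, ?_⟩, fun A => ?_⟩
  · rw [det_smul, hc, inv_mul_cancel₀ (norm_ne_zero_iff.1 (hdet.trans_ne one_ne_zero))]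
  · rw [conjTranspose_smul, smul_mul_assoc, smul_mul_assoc, mul_smul_comm, smul_smul, mul_comm,
      hcc, one_smul]

theorem Matrix.conj_smul_one_sub_two_mul {U : Matrix n n 𝕜} (hU : U ∈ unitaryGroup n 𝕜) (c : 𝕜)
    (X : Matrix n n 𝕜) : U * (c • (1 - 2 * X)) * Uᴴ = c • (1 - 2 * (U * X * Uᴴ)) := by
  have h := map_smul (Unitary.conjStarAlgAut 𝕜 _ ⟨U, hU⟩) c (1 - 2 * X)
  rwa [map_sub, map_mul, map_one, map_ofNat] at h

end

theorem conjIn_of_mem_unitaryGroup {N : ℕ} (hN : 0 < N) {W : Matrix (Fin N) (Fin N) ℂ}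
    (hW : W ∈ unitaryGroup (Fin N) ℂ) (A : Matrix (Fin N) (Fin N) ℂ) :
    ConjIn N (W * A * Wᴴ) A := by
  have : Nonempty (Fin N) := Fin.pos_iff_nonempty.1 hN
  obtain ⟨U, hU, hUW⟩ := exists_mem_specialUnitaryGroup_conj_eq hW
  exact ⟨U, hU, (hUW A).symm⟩

theorem conjIn_Phi_iff {N k : ℕ} (hN : 0 < N) (hk : k ≤ N) {S : Matrix (Fin N) (Fin N) ℂ} :
    ConjIn N S (Phi N k) ↔
      ∃ P : Matrix (Fin N) (Fin N) ℂ,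
        IsStarProjection P ∧ P.trace = k ∧ S = zeta N ^ k • (1 - 2 * P) := by
  constructor
  · rintro ⟨U, hU, rfl⟩
    refine ⟨_, (isStarProjection_initialProj ℂ N k).map (Unitary.conjStarAlgAut ℂ _ ⟨U, hU.1⟩),
      ?_, by rw [Phi_eq_smul_initialProj, conj_smul_one_sub_two_mul hU.1]; rfl⟩
    rw [Unitary.conjStarAlgAut_apply, trace_mul_cycle, Unitary.coe_star_mul_self, one_mul,
      trace_initialProj ℂ hk]
  · rintro ⟨P, hP, htr, rfl⟩
    obtain ⟨W, hW, rfl⟩ := hP.exists_unitary_conj_initialProj htr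
    rw [← conj_smul_one_sub_two_mul hW, ← Phi_eq_smul_initialProj]
    exact conjIn_of_mem_unitaryGroup hN hW _

theorem toLp_mulVec_mem_eigSp {N : ℕ} {P : Matrix (Fin N) (Fin N) ℂ} (hP : IsIdempotentElem P)
    (c : ℂ) (v : Fin N → ℂ) :
    WithLp.toLp 2 (P *ᵥ v) ∈ eigSp N (c • (1 - 2 * P)) (-c) := by
  show (c • (1 - 2 * P)) *ᵥ (P *ᵥ v) = -c • (P *ᵥ v)
  rw [mulVec_mulVec, smul_mul_assoc, sub_mul, one_mul, mul_assoc, hP.eq, two_mul,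
    sub_add_cancel_left, smul_neg, neg_smul, neg_mulVec, smul_mulVec]

theorem conj_mul_of_orthogonal_eigenspaces_general (N i j : ℕ) (hN : 0 < N) (hij : i + j ≤ N)
    (S T : Matrix (Fin N) (Fin N) ℂ)
    (hSc : ConjIn N S (Phi N i)) (hTc : ConjIn N T (Phi N j))
    (horth : ∀ u ∈ eigSp N S (-(zeta N) ^ i), ∀ v ∈ eigSp N T (-(zeta N) ^ j),
      (inner ℂ u v : ℂ) = 0) :
    ConjIn N (S * T) (Phi N (i + j)) := by
  obtain ⟨P, hP, hPtr, rfl⟩ := (conjIn_Phi_iff hN (by omega)).1 hSc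
  obtain ⟨Q, hQ, hQtr, rfl⟩ := (conjIn_Phi_iff hN (by omega)).1 hTc
  have hPQ : P * Q = 0 := by
    have h := conjTranspose_mul_eq_zero_of_inner_mulVec_eq_zero fun u v =>
      horth _ (toLp_mulVec_mem_eigSp hP.isIdempotentElem _ u) _
        (toLp_mulVec_mem_eigSp hQ.isIdempotentElem _ v)
    rwa [show Pᴴ = P from hP.isSelfAdjoint] at h
  rw [smul_mul_smul_comm, ← pow_add, one_sub_two_mul_mul_one_sub_two_mul hPQ]
  refine (conjIn_Phi_iff hN hij).2 ⟨P + Q, hP.add hQ hPQ, ?_, rfl⟩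
  rw [trace_add, hPtr, hQtr, Nat.cast_add]

theorem conj_mul_of_orthogonal_eigenspaces (N i j : ℕ) (hN : 0 < N) (hij : i + j ≤ N)
    (S T : Matrix (Fin N) (Fin N) ℂ)
    (hS : S ∈ Matrix.specialUnitaryGroup (Fin N) ℂ)
    (hT : T ∈ Matrix.specialUnitaryGroup (Fin N) ℂ)
    (hSc : ConjIn N S (Phi N i)) (hTc : ConjIn N T (Phi N j))
    (horth : ∀ u ∈ eigSp N S (-(zeta N) ^ i), ∀ v ∈ eigSp N T (-(zeta N) ^ j),
      (inner ℂ u v : ℂ) = 0) :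
    ConjIn N (S * T) (Phi N (i + j)) :=
  conj_mul_of_orthogonal_eigenspaces_general N i j hN hij S T hSc hTc horth
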